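/- Under the MMSB setup, the K×K matrix V_{*,1}(𝓘,:) is nonsingular and every entry of the vector (V_{*,1}(𝓘,:) V_{*,1}(𝓘,:)')^{-1} 𝟏 is strictly positive, where 𝟏 ∈ ℝ^K is the all-ones vector. -/

import Mathlib

/-!
Since `VᵀV = 1` and `𝓛_τ V = V E`, we get `V = 𝓛_τ V E⁻¹ = 𝒟_τ^{-1/2} Π B` for a `K × K` matrix
`B`. On the pure rows `Π(𝓘,:) = 1`, so the rows of `V(𝓘,:)` are positive multiples of those of `B`
and `M := V_{*,1}(𝓘,:) = N⁻¹ B` with `N` the diagonal of row norms of `B`. Hence `V = W M` with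
`W = 𝒟_τ^{-1/2} Π N` entrywise nonnegative and `W(𝓘ₖ, k) > 0`. Orthonormality reads
`Mᵀ (WᵀW) M = 1`, so `M` is invertible with `(M Mᵀ)⁻¹ = WᵀW`, and `WᵀW 𝟏` is entrywise positive.
-/

open Matrix BigOperators

/-- Euclidean norm of the `i`-th row of a matrix. -/
noncomputable def rowNorm {m k : ℕ} (M : Matrix (Fin m) (Fin k) ℝ) (i : Fin m) : ℝ :=
  Real.sqrt (∑ j, (M i j) ^ 2)

namespace Matrix

variable {m n R : Type*} [Fintype n]

theorem diagonal_mul_diagonal_inv [DecidableEq n] [DivisionRing R] {d : n → R}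
    (hd : ∀ k, d k ≠ 0) : diagonal d * diagonal d⁻¹ = 1 := by
  rw [diagonal_mul_diagonal, ← diagonal_one]
  exact congrArg diagonal (funext fun k => mul_inv_cancel₀ (hd k))

theorem eq_mul_mul_diagonal_inv_of_eq_mul_diagonal_mul_transpose [DecidableEq n] [Field R]
    [Fintype m] {L : Matrix m m R} {V : Matrix m n R} {e : n → R} (hV : Vᵀ * V = 1)
    (he : ∀ k, e k ≠ 0) (hL : L = V * diagonal e * Vᵀ) : V = L * (V * diagonal e⁻¹) := by
  rw [hL, Matrix.mul_assoc, Matrix.mul_assoc, ← Matrix.mul_assoc Vᵀ, hV, Matrix.one_mul,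
    diagonal_mul_diagonal_inv he, Matrix.mul_one]

theorem submatrix_diagonal_mul_mul_of_submatrix_eq_one [DecidableEq n] [Semiring R] [Fintype m]
    [DecidableEq m] {p : Type*} {s : m → R} {A : Matrix m n R} (B : Matrix n p R) {I : n → m}
    (hI : A.submatrix I id = 1) :
    (diagonal s * A * B).submatrix I id = diagonal (s ∘ I) * B := by
  have hsA : (diagonal s * A).submatrix I id = diagonal (s ∘ I) := by
    ext k j
    have hAkj := congrFun (congrFun hI k) j
    simp only [submatrix_apply, id, one_apply] at hAkj
    simp only [submatrix_apply, id, diagonal_mul, hAkj, diagonal_apply, Function.comp_apply]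
    split_ifs <;> simp
  rw [submatrix_mul _ _ _ id _ Function.bijective_id, hsA, submatrix_id_id]

theorem mul_mul_transpose_mul_eq_one [DecidableEq n] [CommRing R] [Fintype m] {W : Matrix m n R}
    {M : Matrix n n R} (h : (W * M)ᵀ * (W * M) = 1) : M * Mᵀ * (Wᵀ * W) = 1 := by
  rw [Matrix.mul_assoc, mul_eq_one_comm, ← h, transpose_mul]
  simp only [Matrix.mul_assoc]

theorem transpose_mul_self_mulVec_one_pos [Ring R] [LinearOrder R] [IsStrictOrderedRing R]
    [Fintype m] {W : Matrix m n R} (hW : ∀ i k, 0 ≤ W i k) {i : m} {k : n} (hik : 0 < W i k) :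
    0 < ((Wᵀ * W) *ᵥ fun _ => 1) k := by
  have hrow : ∀ i, W i k ≤ (W *ᵥ fun _ => 1) i := fun i => by
    simpa [mulVec, dotProduct] using
      Finset.single_le_sum (fun l _ => hW i l) (Finset.mem_univ k)
  rw [← mulVec_mulVec]
  exact Finset.sum_pos' (fun j _ => mul_nonneg (hW j k) ((hW j k).trans (hrow j)))
    ⟨i, Finset.mem_univ i, mul_pos hik (hik.trans_le (hrow i))⟩

end Matrix

theorem rowNorm_diagonal_mul {m k : ℕ} (s : Fin m → ℝ) (M : Matrix (Fin m) (Fin k) ℝ)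
    (i : Fin m) :
    rowNorm (diagonal s * M) i = |s i| * rowNorm M i := by
  simp only [rowNorm, diagonal_mul, mul_pow, ← Finset.mul_sum, Real.sqrt_mul (sq_nonneg _),
    Real.sqrt_sq_eq_abs]

theorem rowNorm_pos {m k : ℕ} {M : Matrix (Fin m) (Fin k) ℝ} {i : Fin m} (h : M i ≠ 0) :
    0 < rowNorm M i := by
  obtain ⟨j, hj⟩ := Function.ne_iff.1 h
  exact Real.sqrt_pos.2 (Finset.sum_pos' (fun _ _ => sq_nonneg _)
    ⟨j, Finset.mem_univ j, pow_pos (abs_pos.2 hj) 2 |>.trans_eq (sq_abs _)⟩)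

theorem div_rowNorm_diagonal_mul {m k : ℕ} {s : Fin m → ℝ} (M : Matrix (Fin m) (Fin k) ℝ)
    {i : Fin m} (hs : 0 < s i) (j : Fin k) :
    (diagonal s * M) i j / rowNorm (diagonal s * M) i = M i j / rowNorm M i := by
  rw [rowNorm_diagonal_mul, abs_of_pos hs, diagonal_mul, mul_div_mul_left _ _ hs.ne']

theorem submatrix_eq_diagonal_inv_rowNorm_mul {m k l : ℕ} {V Vn : Matrix (Fin m) (Fin k) ℝ}
    (hVn : ∀ i j, Vn i j = V i j / rowNorm V i) {I : Fin l → Fin m} {d : Fin l → ℝ}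
    (hd : ∀ i, 0 < d i) {B : Matrix (Fin l) (Fin k) ℝ} (hVI : V.submatrix I id = diagonal d * B) :
    Vn.submatrix I id = diagonal (rowNorm B)⁻¹ * B := by
  ext i j
  rw [submatrix_apply, hVn]
  change (V.submatrix I id) i j / rowNorm (V.submatrix I id) i = _
  rw [hVI, div_rowNorm_diagonal_mul B (hd i), diagonal_mul, div_eq_inv_mul, Pi.inv_apply]

theorem stmt_3_general
    {n K : ℕ}
    (Pi : Matrix (Fin n) (Fin K) ℝ)
    (hPi_nonneg : ∀ i k, 0 ≤ Pi i k)
    (Pt : Matrix (Fin K) (Fin K) ℝ)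
    (ρ τ : ℝ)
    (Om : Matrix (Fin n) (Fin n) ℝ) (hOm : Om = Pi * (ρ • Pt) * Piᵀ)
    (deg : Fin n → ℝ)
    (hpos : ∀ i, 0 < deg i + τ)
    (Ltau : Matrix (Fin n) (Fin n) ℝ)
    (hLtau : Ltau = Matrix.diagonal (fun i => (Real.sqrt (deg i + τ))⁻¹) * Om *
      Matrix.diagonal (fun i => (Real.sqrt (deg i + τ))⁻¹))
    (Idx : Fin K → Fin n) (hIdx : Pi.submatrix Idx id = 1)
    (V : Matrix (Fin n) (Fin K) ℝ) (e : Fin K → ℝ)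
    (hVorth : Vᵀ * V = 1) (he : ∀ k, e k ≠ 0)
    (hVE : Ltau = V * Matrix.diagonal e * Vᵀ)
    (hVrow : ∀ i, V i ≠ 0)
    (Vstar1 : Matrix (Fin n) (Fin K) ℝ)
    (hVstar1 : ∀ i k, Vstar1 i k = V i k / rowNorm V i) :
    IsUnit (Vstar1.submatrix Idx id) ∧
    ∀ k, 0 < (((Vstar1.submatrix Idx id) * (Vstar1.submatrix Idx id)ᵀ)⁻¹ *ᵥ
      (fun _ => (1 : ℝ))) k := by
  set s : Fin n → ℝ := fun i => (√(deg i + τ))⁻¹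
  have hs (i : Fin n) : 0 < s i := inv_pos.2 (Real.sqrt_pos.2 (hpos i))
  set B := ρ • Pt * Piᵀ * diagonal s * (V * diagonal e⁻¹)
  have hVB : V = diagonal s * Pi * B := by
    conv_lhs => rw [eq_mul_mul_diagonal_inv_of_eq_mul_diagonal_mul_transpose hVorth he hVE,
      hLtau, hOm]
    simp only [B, Matrix.mul_assoc]
  have hVIdx : V.submatrix Idx id = diagonal (s ∘ Idx) * B :=
    hVB ▸ submatrix_diagonal_mul_mul_of_submatrix_eq_one B hIdx
  have hB (k : Fin K) : 0 < rowNorm B k := by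
    have hVk : 0 < rowNorm (V.submatrix Idx id) k := rowNorm_pos (hVrow (Idx k))
    rw [hVIdx, rowNorm_diagonal_mul] at hVk
    exact pos_of_mul_pos_right hVk (abs_nonneg _)
  have hM : Vstar1.submatrix Idx id = diagonal (rowNorm B)⁻¹ * B :=
    submatrix_eq_diagonal_inv_rowNorm_mul hVstar1 (fun k => hs (Idx k)) hVIdx
  have hVW : V = diagonal s * Pi * diagonal (rowNorm B) * (diagonal (rowNorm B)⁻¹ * B) := by
    rw [← Matrix.mul_assoc, Matrix.mul_assoc (diagonal s * Pi),
      diagonal_mul_diagonal_inv fun k => (hB k).ne', Matrix.mul_one, hVB]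
  have hMW := mul_mul_transpose_mul_eq_one (hVW ▸ hVorth)
  rw [hM]
  refine ⟨IsUnit.of_mul_eq_one _ ((Matrix.mul_assoc _ _ _).symm.trans hMW), fun k => ?_⟩
  rw [inv_eq_right_inv hMW]
  refine transpose_mul_self_mulVec_one_pos (fun i l => ?_) (i := Idx k) ?_
  · rw [mul_diagonal, diagonal_mul]
    exact mul_nonneg (mul_nonneg (hs i).le (hPi_nonneg i l)) (hB l).le
  · have hpure : Pi (Idx k) k = 1 := by simpa using congrFun (congrFun hIdx k) k
    rw [mul_diagonal, diagonal_mul, hpure, mul_one]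
    exact mul_pos (hs _) (hB k)

/-- Lemma 3.4: `V_{*,1}(𝓘,:)` is nonsingular and every entry of
`(V_{*,1}(𝓘,:) V_{*,1}(𝓘,:)')⁻¹ 𝟏` is strictly positive. -/
theorem stmt_3
    {n K : ℕ} (hn : 0 < n) (hK : 0 < K) (hKn : K ≤ n)
    (Pi : Matrix (Fin n) (Fin K) ℝ)
    (hPi_nonneg : ∀ i k, 0 ≤ Pi i k)
    (hPi_rowsum : ∀ i, ∑ k, Pi i k = 1)
    (hPi_rank : Pi.rank = K)
    (hpure : ∀ k : Fin K, ∃ i : Fin n, ∀ l, Pi i l = if l = k then 1 else 0)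
    (Pt : Matrix (Fin K) (Fin K) ℝ)
    (hPt_symm : Pt.IsSymm)
    (hPt_nonneg : ∀ k l, 0 ≤ Pt k l)
    (hPt_rank : Pt.rank = K)
    (hPt_le_one : ∀ k l, Pt k l ≤ 1)
    (hPt_max : ∃ k l, Pt k l = 1)
    (ρ τ : ℝ) (hρ0 : 0 < ρ) (hρ1 : ρ ≤ 1) (hτ : 0 ≤ τ)
    (Om : Matrix (Fin n) (Fin n) ℝ) (hOm : Om = Pi * (ρ • Pt) * Piᵀ)
    (deg : Fin n → ℝ) (hdeg : ∀ i, deg i = ∑ j, Om i j)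
    (hpos : ∀ i, 0 < deg i + τ)
    (Ltau : Matrix (Fin n) (Fin n) ℝ)
    (hLtau : Ltau = Matrix.diagonal (fun i => (Real.sqrt (deg i + τ))⁻¹) * Om *
      Matrix.diagonal (fun i => (Real.sqrt (deg i + τ))⁻¹))
    (Idx : Fin K → Fin n) (hIdx : Pi.submatrix Idx id = 1)
    (V : Matrix (Fin n) (Fin K) ℝ) (e : Fin K → ℝ)
    (hVorth : Vᵀ * V = 1) (he : ∀ k, e k ≠ 0)
    (hVE : Ltau = V * Matrix.diagonal e * Vᵀ)
    (hVrow : ∀ i, V i ≠ 0)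
    (Vstar1 : Matrix (Fin n) (Fin K) ℝ)
    (hVstar1 : ∀ i k, Vstar1 i k = V i k / rowNorm V i) :
    IsUnit (Vstar1.submatrix Idx id) ∧
    ∀ k, 0 < (((Vstar1.submatrix Idx id) * (Vstar1.submatrix Idx id)ᵀ)⁻¹ *ᵥ
      (fun _ => (1 : ℝ))) k :=
  stmt_3_general Pi hPi_nonneg Pt ρ τ Om hOm deg hpos Ltau hLtau Idx hIdx V e hVorth he hVE hVrow
    Vstar1 hVstar1
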